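/- arXiv:1105.3250 — 4 statements merged into one kernel-verified Lean document; each statement's English description precedes it below -/
import Mathlib

section
/- Let Λ be a λ-synchronizing subshift. For every μ ∈ S_l(Λ) there exists μ' ∈ S_{l+1}(Λ) with μ ∼_l μ', i.e. Γ_l^-(μ) = Γ_l^-(μ'). -/
open scoped Classical

/-- The language of a subshift over alphabet `A`: nonempty, factorial
(closed under subwords) and extendable on both sides. -/
structure ShiftLang (A : Type*) where
  L : Set (List A)
  nil_mem : [] ∈ L
  factor : ∀ u v w : List A, u ++ v ++ w ∈ L → v ∈ L
  ext_left : ∀ w ∈ L, ∃ a : A, (a :: w) ∈ L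
  ext_right : ∀ w ∈ L, ∃ a : A, (w ++ [a]) ∈ L

namespace ShiftLang

variable {A : Type*} (Λ : ShiftLang A)

/-- Admissible words of length `l`. -/
def B (l : ℕ) : Set (List A) := {w | w ∈ Λ.L ∧ w.length = l}

/-- `Γ_l^-(μ)`: admissible words `ν` of length `l` with `νμ` admissible. -/
def Γminus (l : ℕ) (μ : List A) : Set (List A) := {ν | ν ∈ Λ.B l ∧ ν ++ μ ∈ Λ.L}

/-- `Γ_*^+(μ)`: followers of `μ`. -/
def Γplus (μ : List A) : Set (List A) := {ω | μ ++ ω ∈ Λ.L}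

/-- `S_l(Λ)`: the set of `l`-synchronizing words. -/
def Sync (l : ℕ) : Set (List A) :=
  {μ | μ ∈ Λ.L ∧ ∀ ω ∈ Λ.Γplus μ, Λ.Γminus l μ = Λ.Γminus l (μ ++ ω)}

/-- Irreducibility of a subshift in terms of its language. -/
def Irreducible : Prop := ∀ μ ∈ Λ.L, ∀ ν ∈ Λ.L, ∃ η, μ ++ η ++ ν ∈ Λ.L

/-- `λ`-synchronization of a subshift. -/
def IsLambdaSync : Prop :=
  ∀ l : ℕ, ∀ η ∈ Λ.B l, ∀ k : ℕ, l ≤ k → ∃ ν ∈ Λ.Sync k, η ++ ν ∈ Λ.Sync (k - l)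

/-- `μ ≻ ν` : there is `η` with `Γ_*^+(ν) = Γ_*^+(μην)`. -/
def Succ (μ ν : List A) : Prop := ∃ η, Λ.Γplus ν = Λ.Γplus (μ ++ η ++ ν)

/-- Synchronizing transitivity. -/
def SyncTransitive : Prop := ∀ μ ∈ Λ.L, ∀ ν ∈ Λ.L, Λ.Succ μ ν ∧ Λ.Succ ν μ

/-- The right one-sided shift space `X_Λ`. -/
def X : Set (ℕ → A) := {x | ∀ n : ℕ, (List.ofFn fun i : Fin n => x i) ∈ Λ.L}

end ShiftLang

namespace ShiftLang

theorem IsLambdaSync.exists_append_mem_sync {A : Type*} {Λ : ShiftLang A} (hls : Λ.IsLambdaSync)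
    {μ : List A} (hμ : μ ∈ Λ.L) (m : ℕ) : ∃ ν, μ ++ ν ∈ Λ.Sync m := by
  obtain ⟨ν, -, hμν⟩ := hls μ.length μ ⟨hμ, rfl⟩ (μ.length + m) (Nat.le_add_right _ _)
  exact ⟨ν, by simpa using hμν⟩

end ShiftLang

theorem exists_sync_succ_pastEquiv_general {A : Type*} (Λ : ShiftLang A)
    (hls : Λ.IsLambdaSync) (l : ℕ) (μ : List A)
    (hμ : μ ∈ Λ.Sync l) :
    ∃ μ' ∈ Λ.Sync (l + 1), Λ.Γminus l μ = Λ.Γminus l μ' := by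
  obtain ⟨ν, hμν⟩ := hls.exists_append_mem_sync hμ.1 (l + 1)
  exact ⟨μ ++ ν, hμν, hμ.2 ν hμν.1⟩

/-- in a `λ`-synchronizing subshift, every `μ ∈ S_l(Λ)` is `l`-past equivalent
to some `μ' ∈ S_{l+1}(Λ)`. -/
theorem exists_sync_succ_pastEquiv {A : Type*} (Λ : ShiftLang A)
    (hirr : Λ.Irreducible) (hls : Λ.IsLambdaSync) (l : ℕ) (μ : List A)
    (hμ : μ ∈ Λ.Sync l) :
    ∃ μ' ∈ Λ.Sync (l + 1), Λ.Γminus l μ = Λ.Γminus l μ' :=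
  exists_sync_succ_pastEquiv_general Λ hls l μ hμ
end

section
/- Let Λ be a λ-synchronizing subshift. For every μ ∈ S_l(Λ) there exist a symbol β ∈ Σ and ν ∈ S_{l+1}(Λ) such that Γ_l^-(μ) = Γ_l^-(βν). -/
open scoped Classical

/-!
Apply λ-synchronization to `μ = βμ'`: it yields a `(|μ| + l)`-synchronizing word `ν` with `μν`
admissible. Since `Γ_j^-(τν)` is determined by `Γ_{|τ|+j}^-(ν)`, the word `μ'ν` is
`(l + 1)`-synchronizing, and `Γ_l^-(μ) = Γ_l^-(βμ'ν)` because `μ` is `l`-synchronizing.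
For `μ` empty, any `(l + 1)`-synchronizing `ν` extended by a symbol on the left will do.
-/

namespace ShiftLang

variable {A : Type*} (Λ : ShiftLang A)

theorem mem_L_of_append_left {u v : List A} (h : u ++ v ∈ Λ.L) : u ∈ Λ.L :=
  Λ.factor [] u v (by simpa using h)

theorem mem_L_of_append_right {u v : List A} (h : u ++ v ∈ Λ.L) : v ∈ Λ.L :=
  Λ.factor u v [] (by simpa using h)

theorem mem_Γminus_append_iff {j : ℕ} {α τ ν : List A} :
    α ∈ Λ.Γminus j (τ ++ ν) ↔ α.length = j ∧ α ++ τ ∈ Λ.Γminus (τ.length + j) ν := by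
  simp only [Γminus, B, Set.mem_ofPred_eq, List.length_append, ← List.append_assoc]
  constructor
  · rintro ⟨⟨-, rfl⟩, h⟩
    exact ⟨rfl, ⟨Λ.mem_L_of_append_left h, Nat.add_comm _ _⟩, h⟩
  · rintro ⟨rfl, -, h⟩
    exact ⟨⟨Λ.mem_L_of_append_left (Λ.mem_L_of_append_left h), rfl⟩, h⟩

theorem append_mem_sync {j : ℕ} {τ ν : List A} (hν : ν ∈ Λ.Sync (τ.length + j))
    (hτν : τ ++ ν ∈ Λ.L) : τ ++ ν ∈ Λ.Sync j := by
  refine ⟨hτν, fun ω hω => Set.ext fun α => ?_⟩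
  have hνω : ω ∈ Λ.Γplus ν := Λ.mem_L_of_append_right (u := τ) (by simpa [Γplus] using hω)
  rw [List.append_assoc, Λ.mem_Γminus_append_iff, Λ.mem_Γminus_append_iff, hν.2 ω hνω]

theorem exists_sync_append_mem (hls : Λ.IsLambdaSync) {μ : List A} (hμ : μ ∈ Λ.L) (k : ℕ) :
    ∃ ν ∈ Λ.Sync (μ.length + k), μ ++ ν ∈ Λ.L := by
  obtain ⟨ν, hν, hμν⟩ := hls μ.length μ ⟨hμ, rfl⟩ (μ.length + k) (Nat.le_add_right _ _)
  exact ⟨ν, hν, hμν.1⟩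

end ShiftLang

theorem exists_symbol_sync_succ_general {A : Type*} (Λ : ShiftLang A)
    (hls : Λ.IsLambdaSync) (l : ℕ) (μ : List A)
    (hμ : μ ∈ Λ.Sync l) :
    ∃ (β : A) (ν : List A), ν ∈ Λ.Sync (l + 1) ∧ Λ.Γminus l μ = Λ.Γminus l (β :: ν) := by
  cases μ with
  | nil =>
    obtain ⟨ν, hν, -⟩ := Λ.exists_sync_append_mem hls Λ.nil_mem (l + 1)
    obtain ⟨β, hβν⟩ := Λ.ext_left ν hν.1
    rw [List.length_nil, Nat.zero_add] at hν
    exact ⟨β, ν, hν, hμ.2 (β :: ν) hβν⟩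
  | cons β μ' =>
    obtain ⟨ν, hν, hμν⟩ := Λ.exists_sync_append_mem hls hμ.1 l
    rw [List.length_cons, Nat.add_assoc, Nat.add_comm 1] at hν
    exact ⟨β, μ' ++ ν, Λ.append_mem_sync hν (Λ.mem_L_of_append_right (u := [β]) hμν),
      hμ.2 ν hμν⟩

/-- in a `λ`-synchronizing subshift, for every `μ ∈ S_l(Λ)` there exist a symbol
`β` and `ν ∈ S_{l+1}(Λ)` with `Γ_l^-(μ) = Γ_l^-(βν)`. -/
theorem exists_symbol_sync_succ {A : Type*} (Λ : ShiftLang A)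
    (hirr : Λ.Irreducible) (hls : Λ.IsLambdaSync) (l : ℕ) (μ : List A)
    (hμ : μ ∈ Λ.Sync l) :
    ∃ (β : A) (ν : List A), ν ∈ Λ.Sync (l + 1) ∧ Λ.Γminus l μ = Λ.Γminus l (β :: ν) :=
  exists_symbol_sync_succ_general Λ hls l μ hμ
end

section
/- If a λ-graph system 𝔏 presenting a subshift Λ is ι-irreducible, then Λ is an irreducible subshift. -/
open scoped Classical

/-- A (left-resolving–free) `λ`-graph system: a labeled Bratteli diagram with `ι`-maps. -/
structure LGS (A : Type*) where
  V : ℕ → Type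
  edge : ∀ l : ℕ, V l → A → V (l + 1) → Prop
  ι : ∀ l : ℕ, V (l + 1) → V l
  ι_surj : ∀ l, Function.Surjective (ι l)
  exists_succ : ∀ l (v : V l), ∃ a u, edge l v a u
  exists_pred : ∀ l (u : V (l + 1)), ∃ a v, edge l v a u
  local_prop : ∀ l (u : V l) (v : V (l + 2)) (a : A),
    (∃ w, edge (l + 1) w a v ∧ ι l w = u) ↔ edge l u a (ι (l + 1) v)

namespace LGS

variable {A : Type*} (G : LGS A)

/-- Labeled paths in a `λ`-graph system. -/
inductive Path : ∀ {l m : ℕ}, G.V l → List A → G.V m → Prop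
  | nil {l : ℕ} (v : G.V l) : Path v [] v
  | cons {l m : ℕ} {v : G.V l} {a : A} {u : G.V (l + 1)} {w : List A} {x : G.V m} :
      G.edge l v a u → Path u w x → Path v (a :: w) x

/-- The word `w` leaves the vertex `v`. -/
def Leaves {l : ℕ} (v : G.V l) (w : List A) : Prop := ∃ m, ∃ u : G.V m, G.Path v w u

/-- The vertex `v` launches the word `w`: `w` leaves `v` and no other vertex of `V_l`. -/
def Launches {l : ℕ} (v : G.V l) (w : List A) : Prop :=
  G.Leaves v w ∧ ∀ v' : G.V l, G.Leaves v' w → v' = v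

/-- Left-resolving: edges with the same label have distinct terminal vertices. -/
def LeftResolving : Prop :=
  ∀ (l : ℕ) (v v' : G.V l) (a : A) (u : G.V (l + 1)), G.edge l v a u → G.edge l v' a u → v = v'

/-- The predecessor set `Γ_l^-(v)` of a vertex: words of length `l` labeling paths from `V_0` to `v`. -/
def ΓminusV {l : ℕ} (v : G.V l) : Set (List A) :=
  {w | w.length = l ∧ ∃ v0 : G.V 0, G.Path v0 w v}

/-- Predecessor-separated: distinct vertices of `V_l` have distinct predecessor sets. -/
def PredecessorSeparated : Prop := ∀ (l : ℕ) (u v : G.V l), G.ΓminusV u = G.ΓminusV v → u = v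

/-- A `λ`-synchronizing `λ`-graph system: every vertex launches some word. -/
def LambdaSynchronizing : Prop := ∀ (l : ℕ) (v : G.V l), ∃ w : List A, G.Launches v w

/-- `G` presents the subshift `Λ`: the language of `Λ` is the set of words labeling paths of `G`. -/
def Presents (Λ : ShiftLang A) : Prop :=
  ∀ w : List A, w ∈ Λ.L ↔ ∃ (l : ℕ) (v : G.V l), G.Leaves v w

/-- Iterated `ι`-map `ι^n : V_{l+n} → V_l`. -/
def iotaPow : ∀ (n : ℕ) {l : ℕ}, G.V (l + n) → G.V l
  | 0, _, v => v
  | n + 1, l, v => iotaPow n (G.ι (l + n) v)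

/-- `ι`-irreducibility of a `λ`-graph system. -/
def IotaIrreducible : Prop :=
  ∀ (l : ℕ) (v u : G.V l) (γ : List A) (t : G.V (l + γ.length)), G.Path u γ t →
    ∃ (n : ℕ) (u' : G.V (l + n)) (w : List A) (t' : G.V (l + n + γ.length)),
      G.iotaPow n u' = u ∧ G.Path v w u' ∧ G.Path u' γ t' ∧
      G.iotaPow n (cast (congrArg G.V (Nat.add_right_comm l n γ.length)) t') = t

/-- `λ`-irreducibility of a `λ`-graph system. -/
def LambdaIrreducible : Prop :=
  ∀ (l : ℕ) (u v : G.V l), ∃ L : ℕ, ∀ w : G.V (l + L),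
    G.iotaPow L w = u → ∃ γ : List A, G.Path v γ w

/-- `Γ_∞^+(v)`: infinite label sequences of infinite paths starting at `v`. -/
def GammaInf {l : ℕ} (v : G.V l) : Set (ℕ → A) :=
  {x | ∃ vs : ∀ n : ℕ, G.V (l + n), vs 0 = v ∧ ∀ n, G.edge (l + n) (vs n) (x n) (vs (n + 1))}

/-- Condition (I): every vertex has at least two distinct infinite follower label sequences. -/
def ConditionI : Prop := ∀ (l : ℕ) (v : G.V l), ∃ x ∈ G.GammaInf v, ∃ y ∈ G.GammaInf v, x ≠ y

/-- `G` is (isomorphic to) the `λ`-synchronizing `λ`-graph system `𝔏^{λ(Λ)}` of `Λ`: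
vertices of `V_l` correspond to `l`-past equivalence classes of `l`-synchronizing words
(identified via their predecessor sets), and edges are as in the canonical construction. -/
def IsLambdaSyncSystem (Λ : ShiftLang A) : Prop :=
  (∀ (l : ℕ) (v : G.V l), ∃ μ ∈ Λ.Sync l, G.ΓminusV v = Λ.Γminus l μ) ∧
  (∀ l : ℕ, ∀ μ ∈ Λ.Sync l, ∃ v : G.V l, G.ΓminusV v = Λ.Γminus l μ) ∧
  (∀ (l : ℕ) (v : G.V l) (a : A) (u : G.V (l + 1)),
    G.edge l v a u ↔ ∃ ν ∈ Λ.Sync (l + 1), (a :: ν) ∈ Λ.L ∧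
      G.ΓminusV u = Λ.Γminus (l + 1) ν ∧ G.ΓminusV v = Λ.Γminus l (a :: ν))

end LGS

/-- The partial isometry `S_w = S_{w_1} ⋯ S_{w_k}` associated with a word. -/
def sword {A R : Type*} [Monoid R] (S : A → R) (w : List A) : R := (w.map S).prod

/-!
Let `μ` label a path ending at a vertex `x`. The local property of `ι` lets a labeled path be
pushed down along `ι` and lifted back up, so the admissible word `ν` leaves some vertex `u` on
the level of `x`. `ι`-irreducibility then yields a path `η` from `x` to a lift of `u` from which
`ν` still leaves, so `μ η ν` labels a path.
-/

namespace LGS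

variable {A : Type*} {G : LGS A}

theorem Path.append {l m k : ℕ} {v : G.V l} {x : G.V m} {y : G.V k} {w₁ w₂ : List A}
    (h₁ : G.Path v w₁ x) (h₂ : G.Path x w₂ y) : G.Path v (w₁ ++ w₂) y := by
  induction h₁ with
  | nil => exact h₂
  | cons e _ ih => exact .cons e (ih h₂)

theorem Path.level_eq {l m : ℕ} {v : G.V l} {w : List A} {x : G.V m}
    (h : G.Path v w x) : m = l + w.length := by
  induction h with
  | nil => rfl
  | cons _ _ ih => rw [ih, List.length_cons]; omega

theorem Path.leaves_append {l m : ℕ} {v : G.V l} {x : G.V m} {w₁ w₂ : List A}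
    (h₁ : G.Path v w₁ x) (h₂ : G.Leaves x w₂) : G.Leaves v (w₁ ++ w₂) := by
  obtain ⟨k, y, p⟩ := h₂
  exact ⟨k, y, h₁.append p⟩

theorem Leaves.iota {γ : List A} : ∀ {l : ℕ} {u : G.V (l + 1)},
    G.Leaves u γ → G.Leaves (G.ι l u) γ := by
  induction γ with
  | nil => intro l _ _; exact ⟨l, _, .nil _⟩
  | cons a γ ih =>
    rintro l u ⟨m, t, h⟩
    cases h with
    | cons e p =>
      obtain ⟨k, y, p'⟩ := ih ⟨m, t, p⟩
      exact ⟨k, y, .cons ((G.local_prop l _ _ a).mp ⟨u, e, rfl⟩) p'⟩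

theorem Leaves.exists_lift {γ : List A} : ∀ {l : ℕ} {u : G.V l},
    G.Leaves u γ → ∃ u' : G.V (l + 1), G.ι l u' = u ∧ G.Leaves u' γ := by
  induction γ with
  | nil =>
    intro l u _
    obtain ⟨u', hu'⟩ := G.ι_surj l u
    exact ⟨u', hu', l + 1, _, .nil _⟩
  | cons a γ ih =>
    rintro l u ⟨m, t, h⟩
    cases h with
    | cons e p =>
      obtain ⟨x', rfl, k, y, p'⟩ := ih ⟨m, t, p⟩
      obtain ⟨u', e', hu'⟩ := (G.local_prop l u x' a).mpr e
      exact ⟨u', hu', k, y, .cons e' p'⟩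

theorem Leaves.exists_level_zero {γ : List A} : ∀ {l : ℕ} {u : G.V l},
    G.Leaves u γ → ∃ u₀ : G.V 0, G.Leaves u₀ γ
  | 0, u, h => ⟨u, h⟩
  | _ + 1, _, h => h.iota.exists_level_zero

theorem Leaves.exists_at_level {l : ℕ} {u : G.V l} {γ : List A} (h : G.Leaves u γ) :
    ∀ k : ℕ, ∃ u' : G.V k, G.Leaves u' γ
  | 0 => h.exists_level_zero
  | k + 1 => by
    obtain ⟨u', hu'⟩ := h.exists_at_level k
    obtain ⟨u'', -, hu''⟩ := hu'.exists_lift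
    exact ⟨u'', hu''⟩

theorem Presents.exists_leaves_at_level {Λ : ShiftLang A} (hpres : G.Presents Λ) {w : List A}
    (hw : w ∈ Λ.L) (k : ℕ) : ∃ u : G.V k, G.Leaves u w := by
  obtain ⟨l, v, hv⟩ := (hpres w).mp hw
  exact hv.exists_at_level k

theorem IotaIrreducible.exists_leaves_append (hii : G.IotaIrreducible) {k : ℕ} (x : G.V k)
    {u : G.V k} {ν : List A} (hu : G.Leaves u ν) : ∃ η, G.Leaves x (η ++ ν) := by
  obtain ⟨m, t, p⟩ := hu
  obtain rfl := p.level_eq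
  obtain ⟨n, u', η, t', -, pη, pν, -⟩ := hii k x u ν t p
  exact ⟨η, pη.leaves_append ⟨_, t', pν⟩⟩

end LGS

/-- if a `λ`-graph system presenting a subshift `Λ` is `ι`-irreducible, then
`Λ` is irreducible. -/
theorem irreducible_of_iotaIrreducible {A : Type*} (G : LGS A) (Λ : ShiftLang A)
    (hpres : G.Presents Λ) (hii : G.IotaIrreducible) :
    Λ.Irreducible := by
  intro μ hμ ν hν
  obtain ⟨l, v, m, x, pμ⟩ := (hpres μ).mp hμ
  obtain ⟨u, hu⟩ := hpres.exists_leaves_at_level hν m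
  obtain ⟨η, hη⟩ := hii.exists_leaves_append x hu
  refine ⟨η, (hpres _).mpr ⟨l, v, ?_⟩⟩
  rw [List.append_assoc]
  exact pμ.leaves_append hη
end

section
/- For partial isometries s_μ, s_α, s_β satisfying Ps_α = s_α, s_α*P = s_α* and P s_β* s_β = s_β* s_β (P a projection), the following identities hold: s_μ*(P − s_α* s_α)s_μ · s_μ* s_β* s_β s_μ = (P − s_{αμ}* s_{αμ}) s_{βμ}* s_{βμ}, and s_α* · s_μ* s_μ (P − s_ν* s_ν) s_α = s_{μα}* s_{μα}(P − s_{να}* s_{να}). -/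
/-! Expand both sides of each identity. Conjugation by a partial isometry `s` is multiplicative
on elements commuting with its range projection `s s*`: `(s* u s)(s* t s) = s* (u t) s`.
Together with `s* P = s*` and `s P = s` (the latter because the source projection `s* s` lies
under `P`), the expanded terms match one by one. -/

def IsPartialIsometry {R : Type*} [Mul R] [Star R] (s : R) : Prop :=
  s * star s * s = s

theorem star_mul_mul_self_eq {R : Type*} [Semigroup R] [StarMul R] (a b : R) :
    star (a * b) * (a * b) = star b * (star a * a) * b := by
  simp only [star_mul, mul_assoc]

theorem IsSelfAdjoint.mul_eq_self_of_mul_eq_self {R : Type*} [Mul R] [StarMul R] {a P : R}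
    (ha : IsSelfAdjoint a) (hP : IsSelfAdjoint P) (h : P * a = a) : a * P = a := by
  simpa only [star_mul, ha.star_eq, hP.star_eq] using congrArg star h

namespace IsPartialIsometry

variable {R : Type*} [Semigroup R] [StarMul R] {s : R}

theorem mul_star_mul_self (hs : IsPartialIsometry s) : s * (star s * s) = s := by
  rw [← mul_assoc]; exact hs

theorem mul_eq_self_of_source_le (hs : IsPartialIsometry s) {P : R} (hP : IsSelfAdjoint P)
    (hsrc : P * (star s * s) = star s * s) : s * P = s := by
  have hsrcP : star s * s * P = star s * s :=
    (IsSelfAdjoint.star_mul_self s).mul_eq_self_of_mul_eq_self hP hsrc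
  calc s * P = s * (star s * s) * P := by rw [hs.mul_star_mul_self]
    _ = s := by rw [mul_assoc, hsrcP, hs.mul_star_mul_self]

theorem conj_mul_conj (hs : IsPartialIsometry s) {u t : R} (hc : Commute (s * star s) t) :
    star s * u * s * (star s * t * s) = star s * (u * t) * s := by
  calc star s * u * s * (star s * t * s) = star s * u * (s * star s * t) * s := by
        simp only [mul_assoc]
    _ = star s * u * (t * (s * star s * s)) := by rw [hc.eq]; simp only [mul_assoc]
    _ = star s * (u * t) * s := by rw [hs]; simp only [mul_assoc]

theorem source_mul_conj (hs : IsPartialIsometry s) {t : R} (hc : Commute (s * star s) t) :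
    star s * s * (star s * t * s) = star s * t * s := by
  calc star s * s * (star s * t * s) = star s * (s * star s * t) * s := by
        simp only [mul_assoc]
    _ = star s * (t * (s * star s * s)) := by rw [hc.eq]; simp only [mul_assoc]
    _ = star s * t * s := by rw [hs, mul_assoc]

end IsPartialIsometry

theorem partialIsometry_identities_general {R : Type*} [Ring R] [StarRing R]
    (P sμ sα sβ sν : R)
    (hPsa : star P = P)
    (hpi : ∀ x ∈ ({sμ, sα, sβ, sν} : Set R), x * star x * x = x)
    (hleftP : ∀ x ∈ ({sμ, sα, sβ, sν} : Set R), star x * P = star x)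
    (hsrc : ∀ x ∈ ({sμ, sα, sβ, sν} : Set R), P * (star x * x) = star x * x)
    (hcomm : ∀ x ∈ ({sμ, sα, sβ, sν} : Set R), ∀ y ∈ ({sμ, sα, sβ, sν} : Set R),
      Commute (x * star x) (star y * y) ∧ Commute (star x * x) (star y * y) ∧
      Commute (x * star x) (y * star y)) :
    (star sμ * (P - star sα * sα) * sμ) * (star sμ * (star sβ * sβ) * sμ)
        = (P - star (sα * sμ) * (sα * sμ)) * (star (sβ * sμ) * (sβ * sμ)) ∧
    star sα * (star sμ * sμ * (P - star sν * sν)) * sα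
        = star (sμ * sα) * (sμ * sα) * (P - star (sν * sα) * (sν * sα)) := by
  have mμ : sμ ∈ ({sμ, sα, sβ, sν} : Set R) := by simp
  have mα : sα ∈ ({sμ, sα, sβ, sν} : Set R) := by simp
  have mβ : sβ ∈ ({sμ, sα, sβ, sν} : Set R) := by simp
  have mν : sν ∈ ({sμ, sα, sβ, sν} : Set R) := by simp
  have hμ : IsPartialIsometry sμ := hpi sμ mμ
  have hα : IsPartialIsometry sα := hpi sα mα
  have hP : IsSelfAdjoint P := hPsa
  have hμP : sμ * P = sμ := hμ.mul_eq_self_of_source_le hP (hsrc sμ mμ)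
  have hαP : sα * P = sα := hα.mul_eq_self_of_source_le hP (hsrc sα mα)
  have hPμ : P * star sμ = star sμ := by
    simpa only [star_mul, hPsa] using congrArg star hμP
  have hμβ := hμ.source_mul_conj (hcomm sμ mμ sβ mβ).1
  have hαν := hα.conj_mul_conj (u := star sμ * sμ) (hcomm sα mα sν mν).1
  have hMP : star sμ * sμ * P = star sμ * sμ :=
    (IsSelfAdjoint.star_mul_self sμ).mul_eq_self_of_mul_eq_self hP (hsrc sμ mμ)
  simp only [star_mul_mul_self_eq]
  constructor
  · have hPY : P * (star sμ * (star sβ * sβ) * sμ) = star sμ * (star sβ * sβ) * sμ := by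
      simp only [← mul_assoc, hPμ]
    rw [mul_sub, sub_mul, hleftP sμ mμ, sub_mul, hμβ, sub_mul, hPY]
  · rw [mul_sub, hMP, mul_sub, sub_mul, mul_sub, mul_assoc _ sα P, hαP, hαν]

/-- Lemma 4.5: for partial isometries `sμ, sα, sβ, sν` and a projection `P`
with `P s_x = s_x`, `s_x* P = s_x*`, `P s_x* s_x = s_x* s_x` (source projections below `P`)
and commuting range/source projections, the identities
`s_μ*(P − s_α* s_α)s_μ · s_μ* s_β* s_β s_μ = (P − s_{αμ}* s_{αμ}) s_{βμ}* s_{βμ}` and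
`s_α* · s_μ* s_μ (P − s_ν* s_ν) s_α = s_{μα}* s_{μα}(P − s_{να}* s_{να})` hold. -/
theorem partialIsometry_identities {R : Type*} [Ring R] [StarRing R]
    (P sμ sα sβ sν : R)
    (hPproj : P * P = P) (hPsa : star P = P)
    (hpi : ∀ x ∈ ({sμ, sα, sβ, sν} : Set R), x * star x * x = x)
    (hPleft : ∀ x ∈ ({sμ, sα, sβ, sν} : Set R), P * x = x)
    (hleftP : ∀ x ∈ ({sμ, sα, sβ, sν} : Set R), star x * P = star x)
    (hsrc : ∀ x ∈ ({sμ, sα, sβ, sν} : Set R), P * (star x * x) = star x * x)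
    (hcomm : ∀ x ∈ ({sμ, sα, sβ, sν} : Set R), ∀ y ∈ ({sμ, sα, sβ, sν} : Set R),
      Commute (x * star x) (star y * y) ∧ Commute (star x * x) (star y * y) ∧
      Commute (x * star x) (y * star y)) :
    (star sμ * (P - star sα * sα) * sμ) * (star sμ * (star sβ * sβ) * sμ)
        = (P - star (sα * sμ) * (sα * sμ)) * (star (sβ * sμ) * (sβ * sμ)) ∧
    star sα * (star sμ * sμ * (P - star sν * sν)) * sα
        = star (sμ * sα) * (sμ * sα) * (P - star (sν * sα) * (sν * sα)) :=
  partialIsometry_identities_general P sμ sα sβ sν hPsa hpi hleftP hsrc hcomm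
end
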